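/- arXiv:1808.10286 — 2 statements merged into one kernel-verified Lean document; each statement's English description precedes it below -/
import Mathlib

section
/- Let θ be a real number with 0 < θ ≤ 1/2 and let q be a positive integer. Then there exists a finite set W of q-tuples of nonnegative real numbers, of cardinality at most (e/θ)^{q-1}, such that every tuple (c_1,…,c_q) ∈ W satisfies c_1 + ⋯ + c_q = 1, and with the following property: for every choice of real numbers A_1,…,A_q and Λ with A_j ≤ 0 for j = 1,…,q and A_1 + ⋯ + A_q ≤ −Λ, there exists a tuple (c_1,…,c_q) ∈ W such that A_j ≤ −c_j(1−θ)Λ for all j = 1,…,q. -/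
/-!
`W` is the grid of points `m / N` of the standard simplex, `m ∈ ℕ^q` with `∑ m = N`, for
`N ≈ (q - 1)(1 - θ)/θ`. Given `A` and `Λ > 0`, round each `-A_j N / ((1 - θ) Λ)` down: the
total loss is below `q`, and the slack `N / (1 - θ) - N ≥ q - 1` absorbs it, so the rounded
values still sum to at least `N` and can be lowered to a tuple summing to exactly `N`.

There are at most `binom(N + q - 1, q - 1) ≤ (N + k)^k / k!` grid points, `k = q - 1`, and
Stirling's bound `k! ≥ √(2πk) (k/e)^k` together with `(1 + θ/k)^k ≤ e^θ ≤ √(2πk)`, valid for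
`θ ≤ 1/2`, turns this into `(e/θ)^k`.
-/

open Finset Real

lemma one_add_div_pow_le_exp {x : ℝ} (hx : 0 ≤ x) (k : ℕ) : (1 + x / k) ^ k ≤ exp x := by
  rcases k.eq_zero_or_pos with rfl | hk
  · simpa using hx
  calc (1 + x / k) ^ k ≤ exp (x / k) ^ k := by
        gcongr; linarith [add_one_le_exp (x / k)]
    _ = exp x := by rw [← exp_nat_mul]; field_simp

lemma exp_le_sqrt_two_pi_mul {θ : ℝ} (hθ : θ ≤ 1 / 2) {k : ℕ} (hk : 1 ≤ k) :
    exp θ ≤ √(2 * π * k) := by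
  have hk' : (1 : ℝ) ≤ k := by exact_mod_cast hk
  rw [le_sqrt (exp_pos θ).le (by positivity), ← exp_nat_mul]
  calc exp ((2 : ℕ) * θ) ≤ exp 1 := exp_le_exp.mpr (by push_cast; linarith)
    _ ≤ 2 * π * 1 := by linarith [exp_one_lt_d9, pi_gt_three]
    _ ≤ 2 * π * k := by gcongr

lemma pow_div_factorial_le_exp_div_pow {θ : ℝ} (hθ0 : 0 < θ) (hθ : θ ≤ 1 / 2) (k : ℕ)
    {x : ℝ} (hx0 : 0 ≤ x) (hx : x ≤ k / θ + 1) : x ^ k / k.factorial ≤ (exp 1 / θ) ^ k := by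
  rcases k.eq_zero_or_pos with rfl | hk
  · simp
  rw [div_le_iff₀ (by positivity)]
  calc x ^ k ≤ (k / θ + 1) ^ k := by gcongr
    _ = (k / θ) ^ k * (1 + θ / k) ^ k := by rw [← mul_pow]; congr 1; field_simp
    _ ≤ (k / θ) ^ k * √(2 * π * k) := by
        gcongr; exact (one_add_div_pow_le_exp hθ0.le k).trans (exp_le_sqrt_two_pi_mul hθ hk)
    _ = (exp 1 / θ) ^ k * (√(2 * π * k) * (k / exp 1) ^ k) := by
        rw [mul_left_comm, ← mul_pow, mul_comm]; congr 2; field_simp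
    _ ≤ (exp 1 / θ) ^ k * k.factorial := by gcongr; exact Stirling.le_factorial_stirling k

lemma card_piAntidiag_univ {ι : Type*} [Fintype ι] [DecidableEq ι] (n : ℕ) :
    #(piAntidiag (univ : Finset ι) n) = (Fintype.card ι + n - 1).choose n := by
  rw [← map_sym_eq_piAntidiag, card_map, sym_univ, card_univ, Sym.card_sym_eq_choose]

lemma exists_le_sum_eq_of_le_sum {ι : Type*} (s : Finset ι) (b : ι → ℕ) {n : ℕ}
    (hn : n ≤ ∑ i ∈ s, b i) : ∃ m ≤ b, ∑ i ∈ s, m i = n := by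
  classical
  induction s using Finset.induction_on generalizing n with
  | empty => exact ⟨0, fun _ => Nat.zero_le _, by simp_all⟩
  | @insert a s ha ih =>
    rw [sum_insert ha] at hn
    obtain ⟨m, hmb, hm⟩ := ih (n := n - b a) (by omega)
    refine ⟨Function.update m a (min n (b a)), fun i => ?_, ?_⟩
    · rcases eq_or_ne i a with rfl | hia
      · simp
      · simpa [hia] using hmb i
    · rw [sum_insert ha, Function.update_self, sum_update_of_notMem ha, hm]
      omega

lemma sum_sub_card_lt_sum_floor {ι R : Type*} [Ring R] [LinearOrder R] [IsStrictOrderedRing R]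
    [FloorSemiring R] {s : Finset ι} (hs : s.Nonempty) (x : ι → R) :
    ∑ i ∈ s, x i - #s < ∑ i ∈ s, (⌊x i⌋₊ : R) := by
  simpa using sum_lt_sum_of_nonempty hs fun i _ => Nat.sub_one_lt_floor (x i)

section simplexGrid

variable {ι : Type*} [Fintype ι] {N : ℕ}

open scoped Classical in
noncomputable def simplexGrid (ι : Type*) [Fintype ι] (N : ℕ) : Finset (ι → ℝ) :=
  (piAntidiag univ N).image fun m i => (m i : ℝ) / N

lemma mem_simplexGrid {c : ι → ℝ} :
    c ∈ simplexGrid ι N ↔ ∃ m : ι → ℕ, ∑ i, m i = N ∧ (fun i => (m i : ℝ) / N) = c := by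
  simp [simplexGrid]

lemma card_simplexGrid_le : #(simplexGrid ι N) ≤ (Fintype.card ι + N - 1).choose N := by
  classical
  exact card_image_le.trans_eq (card_piAntidiag_univ N)

lemma simplexGrid_nonempty [Nonempty ι] : (simplexGrid ι N).Nonempty := by
  classical
  exact ⟨_, mem_simplexGrid.mpr ⟨Pi.single (Classical.arbitrary ι) N, by simp, rfl⟩⟩

lemma nonneg_of_mem_simplexGrid {c : ι → ℝ} (hc : c ∈ simplexGrid ι N) (i : ι) : 0 ≤ c i := by
  obtain ⟨m, -, rfl⟩ := mem_simplexGrid.mp hc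
  positivity

lemma sum_eq_one_of_mem_simplexGrid (hN : N ≠ 0) {c : ι → ℝ} (hc : c ∈ simplexGrid ι N) :
    ∑ i, c i = 1 := by
  obtain ⟨m, hm, rfl⟩ := mem_simplexGrid.mp hc
  rw [← sum_div, div_eq_one_iff_eq (by exact_mod_cast hN)]
  exact_mod_cast hm

lemma exists_mem_simplexGrid_mul_le [Nonempty ι] {x : ι → ℝ} (hx0 : ∀ i, 0 ≤ x i)
    (hx : (N + Fintype.card ι - 1 : ℝ) ≤ ∑ i, x i) :
    ∃ c ∈ simplexGrid ι N, ∀ i, c i * N ≤ x i := by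
  have hfloor : N ≤ ∑ i, ⌊x i⌋₊ := by
    have := sum_sub_card_lt_sum_floor univ_nonempty x
    rw [card_univ] at this
    have : (N : ℝ) < ∑ i, ⌊x i⌋₊ + 1 := by push_cast; linarith
    exact Nat.lt_succ_iff.mp (by exact_mod_cast this)
  obtain ⟨m, hmx, hm⟩ := exists_le_sum_eq_of_le_sum univ (fun i => ⌊x i⌋₊) hfloor
  refine ⟨_, mem_simplexGrid.mpr ⟨m, hm, rfl⟩, fun i => ?_⟩
  rcases N.eq_zero_or_pos with rfl | hN
  · simpa using hx0 i
  calc (m i : ℝ) / N * N = m i := div_mul_cancel₀ _ (by positivity)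
    _ ≤ ⌊x i⌋₊ := by exact_mod_cast hmx i
    _ ≤ x i := Nat.floor_le (hx0 i)

lemma exists_mem_simplexGrid_mul_mul_le [Nonempty ι] {θ : ℝ} (hθ : θ < 1) (hN0 : 0 < N)
    (hN : (Fintype.card ι - 1 : ℝ) * (1 - θ) ≤ N * θ) {a : ι → ℝ} (ha : ∀ i, 0 ≤ a i)
    {Λ : ℝ} (hΛ : Λ ≤ ∑ i, a i) : ∃ c ∈ simplexGrid ι N, ∀ i, c i * (1 - θ) * Λ ≤ a i := by
  have hθ' : 0 < 1 - θ := by linarith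
  rcases le_or_gt Λ 0 with hΛ0 | hΛ0
  · obtain ⟨c, hc⟩ := simplexGrid_nonempty (ι := ι) (N := N)
    refine ⟨c, hc, fun i => (mul_nonpos_of_nonneg_of_nonpos ?_ hΛ0).trans (ha i)⟩
    exact mul_nonneg (nonneg_of_mem_simplexGrid hc i) hθ'.le
  have hs : 0 < (1 - θ) * Λ := mul_pos hθ' hΛ0
  obtain ⟨c, hc, hcx⟩ := exists_mem_simplexGrid_mul_le (N := N)
    (x := fun i => a i * N / ((1 - θ) * Λ)) (fun i => by have := ha i; positivity) (by
      rw [← sum_div, ← sum_mul, le_div_iff₀ hs]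
      calc (N + Fintype.card ι - 1 : ℝ) * ((1 - θ) * Λ)
          = ((Fintype.card ι - 1) * (1 - θ) + N * (1 - θ)) * Λ := by ring
        _ ≤ (N * θ + N * (1 - θ)) * Λ := by gcongr
        _ = Λ * N := by ring
        _ ≤ (∑ i, a i) * N := by gcongr)
  refine ⟨c, hc, fun i => le_of_mul_le_mul_right ?_ (by exact_mod_cast hN0 : (0 : ℝ) < N)⟩
  have := hcx i
  rw [le_div_iff₀ hs] at this
  linarith

lemma card_simplexGrid_fin_le_exp_div_pow {θ : ℝ} (hθ0 : 0 < θ) (hθ : θ ≤ 1 / 2) {k N : ℕ}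
    (hN : (N : ℝ) + k ≤ k / θ + 1) : (#(simplexGrid (Fin (k + 1)) N) : ℝ) ≤ (exp 1 / θ) ^ k := by
  have hcard : #(simplexGrid (Fin (k + 1)) N) ≤ (N + k).choose k := by
    refine card_simplexGrid_le.trans_eq ?_
    rw [Fintype.card_fin, show k + 1 + N - 1 = N + k by omega, Nat.choose_symm_add]
  calc (#(simplexGrid (Fin (k + 1)) N) : ℝ) ≤ (N + k).choose k := by exact_mod_cast hcard
    _ ≤ ((N + k : ℕ) : ℝ) ^ k / k.factorial := Nat.choose_le_pow_div k (N + k)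
    _ ≤ (exp 1 / θ) ^ k :=
      pow_div_factorial_le_exp_div_pow hθ0 hθ k (by positivity) (by push_cast; exact hN)

end simplexGrid

/-- Evertse–Ferretti covering lemma (Lemma 5.2). -/
theorem evertse_ferretti_covering_lemma
    (θ : ℝ) (hθ0 : 0 < θ) (hθ1 : θ ≤ 1 / 2) (q : ℕ) (hq : 0 < q) :
    ∃ W : Finset (Fin q → ℝ),
      (W.card : ℝ) ≤ (Real.exp 1 / θ) ^ (q - 1) ∧
      (∀ c ∈ W, (∀ j, 0 ≤ c j) ∧ ∑ j, c j = 1) ∧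
      (∀ (A : Fin q → ℝ) (Λ : ℝ),
        (∀ j, A j ≤ 0) → (∑ j, A j) ≤ -Λ →
        ∃ c ∈ W, ∀ j, A j ≤ -(c j * (1 - θ) * Λ)) := by
  obtain ⟨k, rfl⟩ : ∃ k, q = k + 1 := ⟨q - 1, by omega⟩
  obtain ⟨N, hN0, hN_lower, hN_upper⟩ :
      ∃ N : ℕ, 0 < N ∧ k * (1 - θ) ≤ N * θ ∧ (N : ℝ) + k ≤ k / θ + 1 := by
    have hfloor := Nat.floor_le (a := k * (1 - θ) / θ) (by
      have : 0 < 1 - θ := by linarith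
      positivity)
    have hfloor_succ := Nat.lt_floor_add_one (k * (1 - θ) / θ)
    refine ⟨⌊k * (1 - θ) / θ⌋₊ + 1, Nat.succ_pos _, ?_, ?_⟩
    · rw [← div_le_iff₀ hθ0]; push_cast; linarith
    · have : k * (1 - θ) / θ + k = k / θ := by field_simp; ring
      push_cast; linarith
  refine ⟨simplexGrid (Fin (k + 1)) N, card_simplexGrid_fin_le_exp_div_pow hθ0 hθ1 hN_upper,
    fun c hc => ⟨nonneg_of_mem_simplexGrid hc, sum_eq_one_of_mem_simplexGrid hN0.ne' hc⟩,
    fun A Λ hA hΛ => ?_⟩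
  obtain ⟨c, hc, hcA⟩ := exists_mem_simplexGrid_mul_mul_le (θ := θ) (Λ := Λ) (by linarith) hN0
    (by simpa using hN_lower) (a := fun j => -A j) (fun j => by linarith [hA j])
    (by rw [sum_neg_distrib]; linarith)
  exact ⟨c, hc, fun j => by linarith [hcA j]⟩
end

section
/- Let m ≥ n ≥ 1 be integers, let c_0 ≥ c_1 ≥ ⋯ ≥ c_m ≥ 0 be real numbers, let s be a positive integer, let a_1,…,a_s be nonnegative real numbers with a_1 + ⋯ + a_s = D, and for each 1 ≤ j ≤ s let k_{j,0} < k_{j,1} < ⋯ < k_{j,n} be integers with k_{j,0} = 0 and k_{j,l} ≤ m − n + l for all 1 ≤ l ≤ n. Then Σ_{j=1}^s a_j (c_{k_{j,0}} + c_{k_{j,1}} + ⋯ + c_{k_{j,n}}) ≥ (D/(m − n + 1)) · (c_0 + c_1 + ⋯ + c_m). -/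
/-!
Put `M = m - n`. For one bracket `k`, split `c 0 + ⋯ + c m` into the head `c 0 + ⋯ + c M`, which
is at most `(M + 1) c 0 = (M + 1) c_{k 0}`, and the tail `c (M + 1) + ⋯ + c (M + n)`, which is
termwise at most `c_{k 1} + ⋯ + c_{k n}` because `k l ≤ M + l` and `c` is antitone. As the `c_{k l}`
are nonnegative, `c 0 + ⋯ + c m ≤ (M + 1) ∑_l c_{k l}`; averaging with the weights `a j` gives
the estimate.
-/

open Finset

section BracketBound

variable {c : ℕ → ℝ} {M n : ℕ}

lemma sum_range_le_mul_of_antitoneOn (hc : AntitoneOn c (Set.Iic M)) :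
    ∑ i ∈ range (M + 1), c i ≤ (M + 1) * c 0 := by
  have := sum_le_card_nsmul (range (M + 1)) c (c 0) fun i hi =>
    hc (Set.mem_Iic.2 (Nat.zero_le M)) (Set.mem_Iic.2 (Nat.lt_succ_iff.1 (mem_range.1 hi)))
      (Nat.zero_le i)
  simpa using this

lemma sum_range_add_le_sum_succ (hc : AntitoneOn c (Set.Iic (M + n))) {k : Fin (n + 1) → ℕ}
    (hk : ∀ l, k l ≤ M + l) :
    ∑ i ∈ range n, c (M + 1 + i) ≤ ∑ l : Fin n, c (k l.succ) := by
  rw [← Fin.sum_univ_eq_sum_range]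
  refine sum_le_sum fun l _ => hc ?_ ?_ ?_
  · have := hk l.succ
    simp only [Fin.val_succ] at this
    exact Set.mem_Iic.2 (by omega)
  · exact Set.mem_Iic.2 (by omega)
  · simpa [Fin.val_succ, add_right_comm, add_assoc] using hk l.succ

theorem sum_range_le_mul_sum_bracket (hc : AntitoneOn c (Set.Iic (M + n)))
    (hc_nonneg : 0 ≤ c (M + n)) {k : Fin (n + 1) → ℕ} (hk0 : k 0 = 0) (hk : ∀ l, k l ≤ M + l) :
    ∑ i ∈ range (M + n + 1), c i ≤ (M + 1) * ∑ l, c (k l) := by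
  have head := sum_range_le_mul_of_antitoneOn (hc.mono (Set.Iic_subset_Iic.2 (Nat.le_add_right M n)))
  have tail := sum_range_add_le_sum_succ hc hk
  have tail_nonneg : 0 ≤ ∑ l : Fin n, c (k l.succ) := sum_nonneg fun l _ => by
    have hkl : k l.succ ≤ M + n := (hk l.succ).trans (by simp only [Fin.val_succ]; omega)
    exact hc_nonneg.trans (hc (Set.mem_Iic.2 hkl) (Set.mem_Iic.2 le_rfl) hkl)
  have hM_tail : 0 ≤ (M : ℝ) * ∑ l : Fin n, c (k l.succ) := mul_nonneg M.cast_nonneg tail_nonneg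
  rw [add_right_comm, sum_range_add, Fin.sum_univ_succ, hk0, mul_add]
  linarith

end BracketBound

lemma div_mul_le_sum_mul_of_le_mul {ι : Type*} (t : Finset ι) {a b : ι → ℝ} {S N : ℝ}
    (hN : 0 < N) (ha : ∀ j ∈ t, 0 ≤ a j) (hb : ∀ j ∈ t, S ≤ N * b j) :
    (∑ j ∈ t, a j) / N * S ≤ ∑ j ∈ t, a j * b j := by
  rw [div_mul_eq_mul_div, div_le_iff₀ hN, sum_mul, sum_mul]
  refine sum_le_sum fun j hj => ?_
  have := mul_le_mul_of_nonneg_left (hb j hj) (ha j hj)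
  linarith

theorem chow_weight_final_estimate_general
    (n m : ℕ) (hnm : n ≤ m)
    (c : ℕ → ℝ)
    (hmono : ∀ i j : ℕ, i ≤ j → j ≤ m → c j ≤ c i)
    (hnonneg : 0 ≤ c m)
    (s : ℕ)
    (a : Fin s → ℝ) (ha : ∀ j, 0 ≤ a j)
    (D : ℝ) (haD : ∑ j, a j = D)
    (k : Fin s → Fin (n + 1) → ℕ)
    (hk0 : ∀ j : Fin s, k j 0 = 0)
    (hkl : ∀ (j : Fin s) (l : Fin (n + 1)), 1 ≤ (l : ℕ) → k j l ≤ m - n + (l : ℕ)) :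
    ∑ j : Fin s, a j * ∑ l : Fin (n + 1), c (k j l) ≥
      (D / (m - n + 1 : ℝ)) * ∑ i ∈ Finset.range (m + 1), c i := by
  obtain ⟨M, rfl⟩ : ∃ M, m = M + n := ⟨m - n, by omega⟩
  have hk : ∀ j l, k j l ≤ M + l := fun j l => by
    rcases Nat.eq_zero_or_pos l with hl | hl
    · obtain rfl : l = 0 := Fin.ext hl
      simp [hk0]
    · simpa using hkl j l hl
  have hM : ((M + n : ℕ) - n + 1 : ℝ) = M + 1 := by push_cast; ring
  rw [ge_iff_le, hM, ← haD]
  exact div_mul_le_sum_mul_of_le_mul univ (by positivity) (fun j _ => ha j) fun j _ =>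
    sum_range_le_mul_sum_bracket (fun _ _ _ hj hij => hmono _ _ hij hj) hnonneg (hk0 j) (hk j)

/-- The concluding displayed estimate in the proof of Theorem 1.4, giving the lower bound
`e_Y(c) ≥ (D/(m−n+1))(c_0 + ⋯ + c_m)` for the Chow weight. -/
theorem chow_weight_final_estimate
    (n m : ℕ) (hn : 1 ≤ n) (hnm : n ≤ m)
    (c : ℕ → ℝ)
    (hmono : ∀ i j : ℕ, i ≤ j → j ≤ m → c j ≤ c i)
    (hnonneg : 0 ≤ c m)
    (s : ℕ) (hs : 0 < s)
    (a : Fin s → ℝ) (ha : ∀ j, 0 ≤ a j)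
    (D : ℝ) (haD : ∑ j, a j = D)
    (k : Fin s → Fin (n + 1) → ℕ)
    (hkmono : ∀ j : Fin s, StrictMono (k j))
    (hk0 : ∀ j : Fin s, k j 0 = 0)
    (hkl : ∀ (j : Fin s) (l : Fin (n + 1)), 1 ≤ (l : ℕ) → k j l ≤ m - n + (l : ℕ)) :
    ∑ j : Fin s, a j * ∑ l : Fin (n + 1), c (k j l) ≥
      (D / (m - n + 1 : ℝ)) * ∑ i ∈ Finset.range (m + 1), c i :=
  chow_weight_final_estimate_general n m hnm c hmono hnonneg s a ha D haD k hk0 hkl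
end
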